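/- arXiv:cs/0502061 — 2 statements merged into one kernel-verified Lean document; each statement's English description precedes it below -/
import Mathlib

section
/- Let m > 1 and 0 ≤ p < 1 be real numbers, let A = √(p² + 4m(m−1)), set λ₁ = (p(2m−1)+A)/(2m(1+p)) and λ₂ = (p(2m−1)−A)/(2m(1+p)), and let t₀ > 0. Then there exist unique real numbers a₁, a₂ such that, setting bᵢ = aᵢ·((1+p)λᵢ − p(m−1)/m) for i = 1,2, the functions k(t) = a₁(t/t₀)^{λ₁} + a₂(t/t₀)^{λ₂} and y(t) = b₁(t/t₀)^{λ₁} + b₂(t/t₀)^{λ₂} satisfy the DInEd mean-field system on t > 0 together with the initial conditions k(t₀) = p and y(t₀) = 1. -/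
/-! The DInEd system is a Cauchy–Euler system `t · (k, y)' = M · (k, y)`. For every root `λ` of
its characteristic polynomial `m(1+p)λ² − p(2m−1)λ + (m−1)(p−1)`, whose roots are `λ₁` and `λ₂`,
the pair `(t/t₀)^λ · (1, c_λ)` with `c_λ = (1+p)λ − p(m−1)/m` is a solution, hence so is every
combination `a₁ (t/t₀)^λ₁ (1, c_λ₁) + a₂ (t/t₀)^λ₂ (1, c_λ₂)`. At `t = t₀` the initial conditions
become a `2 × 2` linear system in `a₁, a₂` with determinant `c_λ₁ − c_λ₂ = A/m ≠ 0`. -/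

open Real

theorem hasDerivAt_const_mul_div_rpow (a lam : ℝ) {t₀ t : ℝ} (ht₀ : t₀ ≠ 0) (ht : t ≠ 0) :
    HasDerivAt (fun s => a * (s / t₀) ^ lam) (a * lam * (t / t₀) ^ lam / t) t := by
  have hbase : t / t₀ ≠ 0 := div_ne_zero ht ht₀
  have hdiv : HasDerivAt (fun s => s / t₀) (1 / t₀) t := by
    simpa using (hasDerivAt_id t).div_const t₀
  have hpow := (hasDerivAt_rpow_const (p := lam) (Or.inl hbase)).comp t hdiv
  refine (hpow.const_mul a).congr_deriv ?_
  rw [rpow_sub_one hbase]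
  field_simp

def IsEulerSolution (d α β γ : ℝ) (k y : ℝ → ℝ) : Prop :=
  ∀ t, 0 < t →
    HasDerivAt k (y t / (d * t) + α * k t / t) t ∧ HasDerivAt y (β * y t / t + γ * k t / t) t

namespace IsEulerSolution

variable {d α β γ : ℝ}

theorem add {k₁ y₁ k₂ y₂ : ℝ → ℝ} (h₁ : IsEulerSolution d α β γ k₁ y₁)
    (h₂ : IsEulerSolution d α β γ k₂ y₂) :
    IsEulerSolution d α β γ (fun s => k₁ s + k₂ s) (fun s => y₁ s + y₂ s) := by
  intro t ht
  obtain ⟨hk₁, hy₁⟩ := h₁ t ht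
  obtain ⟨hk₂, hy₂⟩ := h₂ t ht
  exact ⟨(hk₁.add hk₂).congr_deriv (by ring), (hy₁.add hy₂).congr_deriv (by ring)⟩

theorem rpow {t₀ lam c : ℝ} (ht₀ : t₀ ≠ 0) (hk : lam = c / d + α) (hy : c * lam = β * c + γ)
    (a : ℝ) :
    IsEulerSolution d α β γ (fun s => a * (s / t₀) ^ lam) (fun s => a * c * (s / t₀) ^ lam) := by
  intro t ht
  constructor
  · refine (hasDerivAt_const_mul_div_rpow a lam ht₀ ht.ne').congr_deriv ?_
    rw [hk]
    ring
  · refine (hasDerivAt_const_mul_div_rpow (a * c) lam ht₀ ht.ne').congr_deriv ?_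
    rw [mul_assoc a, hy]
    ring

end IsEulerSolution

theorem existsUnique_add_eq_and_mul_add_mul_eq {K : Type*} [Field K] {c₁ c₂ : K} (hc : c₁ ≠ c₂)
    (u v : K) : ∃! a : K × K, a.1 + a.2 = u ∧ a.1 * c₁ + a.2 * c₂ = v := by
  have hc' : c₁ - c₂ ≠ 0 := sub_ne_zero.mpr hc
  refine ⟨((v - u * c₂) / (c₁ - c₂), (u * c₁ - v) / (c₁ - c₂)), ⟨?_, ?_⟩, ?_⟩
  · field_simp
    ring
  · field_simp
    ring
  · rintro ⟨a₁, a₂⟩ ⟨hu, hv⟩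
    ext
    · field_simp
      linear_combination hv - c₂ * hu
    · field_simp
      linear_combination c₁ * hu - hv

section DInEd

variable {m p : ℝ}

theorem dined_charPoly_root {s lam : ℝ} (hm : m ≠ 0) (hp : 1 + p ≠ 0)
    (hs : s ^ 2 = p ^ 2 + 4 * m * (m - 1))
    (hlam : lam = (p * (2 * m - 1) + s) / (2 * m * (1 + p))) :
    m * (1 + p) * lam ^ 2 - p * (2 * m - 1) * lam + (m - 1) * (p - 1) = 0 := by
  subst hlam
  field_simp
  linear_combination hs

theorem dined_rpow_isEulerSolution {t₀ lam : ℝ} (hm : m ≠ 0) (hp : 1 + p ≠ 0) (ht₀ : t₀ ≠ 0)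
    (hroot : m * (1 + p) * lam ^ 2 - p * (2 * m - 1) * lam + (m - 1) * (p - 1) = 0) (a : ℝ) :
    IsEulerSolution (1 + p) (p * (m - 1) / (m * (1 + p))) (p / (1 + p)) ((m - 1) / (m * (1 + p)))
      (fun s => a * (s / t₀) ^ lam)
      (fun s => a * ((1 + p) * lam - p * (m - 1) / m) * (s / t₀) ^ lam) :=
  IsEulerSolution.rpow ht₀ (by field_simp; ring)
    (by field_simp; linear_combination (1 + p) * hroot) a

end DInEd

theorem dined_unique_solution_general (m p A lam1 lam2 t₀ : ℝ)
    (hm : 1 < m) (hp0 : 0 ≤ p)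
    (hA : A = Real.sqrt (p ^ 2 + 4 * m * (m - 1)))
    (hl1 : lam1 = (p * (2 * m - 1) + A) / (2 * m * (1 + p)))
    (hl2 : lam2 = (p * (2 * m - 1) - A) / (2 * m * (1 + p)))
    (ht₀ : 0 < t₀) :
    ∃! a : ℝ × ℝ,
      (∀ t : ℝ, 0 < t →
        HasDerivAt
          (fun s : ℝ => a.1 * (s / t₀) ^ lam1 + a.2 * (s / t₀) ^ lam2)
          (((a.1 * ((1 + p) * lam1 - p * (m - 1) / m)) * (t / t₀) ^ lam1
              + (a.2 * ((1 + p) * lam2 - p * (m - 1) / m)) * (t / t₀) ^ lam2)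
              / ((1 + p) * t)
            + (p * (m - 1) / (m * (1 + p)))
              * (a.1 * (t / t₀) ^ lam1 + a.2 * (t / t₀) ^ lam2) / t) t ∧
        HasDerivAt
          (fun s : ℝ => (a.1 * ((1 + p) * lam1 - p * (m - 1) / m)) * (s / t₀) ^ lam1
              + (a.2 * ((1 + p) * lam2 - p * (m - 1) / m)) * (s / t₀) ^ lam2)
          ((p / (1 + p))
              * ((a.1 * ((1 + p) * lam1 - p * (m - 1) / m)) * (t / t₀) ^ lam1
                + (a.2 * ((1 + p) * lam2 - p * (m - 1) / m)) * (t / t₀) ^ lam2) / t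
            + ((m - 1) / (m * (1 + p)))
              * (a.1 * (t / t₀) ^ lam1 + a.2 * (t / t₀) ^ lam2) / t) t) ∧
      a.1 * (t₀ / t₀) ^ lam1 + a.2 * (t₀ / t₀) ^ lam2 = p ∧
      (a.1 * ((1 + p) * lam1 - p * (m - 1) / m)) * (t₀ / t₀) ^ lam1
        + (a.2 * ((1 + p) * lam2 - p * (m - 1) / m)) * (t₀ / t₀) ^ lam2 = 1 := by
  have hm0 : m ≠ 0 := by positivity
  have hp : 1 + p ≠ 0 := by positivity
  have hdisc : 0 < p ^ 2 + 4 * m * (m - 1) := by nlinarith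
  have hA2 : A ^ 2 = p ^ 2 + 4 * m * (m - 1) := hA ▸ sq_sqrt hdisc.le
  have hA0 : A ≠ 0 := hA ▸ (sqrt_pos.mpr hdisc).ne'
  have hroot1 := dined_charPoly_root hm0 hp hA2 hl1
  have hroot2 := dined_charPoly_root hm0 hp (s := -A) (lam := lam2) (by rw [neg_sq, hA2])
    (by rw [hl2, sub_eq_add_neg])
  have hdet :
      ((1 + p) * lam1 - p * (m - 1) / m) - ((1 + p) * lam2 - p * (m - 1) / m) = A / m := by
    rw [hl1, hl2]
    field_simp
    ring
  have hc := sub_ne_zero.mp (hdet ▸ div_ne_zero hA0 hm0)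
  have hsol (a : ℝ × ℝ) := (dined_rpow_isEulerSolution hm0 hp ht₀.ne' hroot1 a.1).add
    (dined_rpow_isEulerSolution hm0 hp ht₀.ne' hroot2 a.2)
  simp only [div_self ht₀.ne', one_rpow, mul_one]
  exact (existsUnique_congr fun a => and_iff_right_of_imp fun _ => hsol a).2
    (existsUnique_add_eq_and_mul_add_mul_eq hc p 1)

/-- For `m > 1`, `0 ≤ p < 1`, `t₀ > 0`, with `A = √(p² + 4m(m−1))`,
`λ₁ = (p(2m−1)+A)/(2m(1+p))`, `λ₂ = (p(2m−1)−A)/(2m(1+p))`, there exist unique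
reals `a₁, a₂` such that, with `bᵢ = aᵢ((1+p)λᵢ − p(m−1)/m)`,
`k(t) = a₁(t/t₀)^{λ₁} + a₂(t/t₀)^{λ₂}` and `y(t) = b₁(t/t₀)^{λ₁} + b₂(t/t₀)^{λ₂}`
satisfy the DInEd mean-field system on `t > 0` with `k(t₀) = p` and `y(t₀) = 1`. -/
theorem dined_unique_solution (m p A lam1 lam2 t₀ : ℝ)
    (hm : 1 < m) (hp0 : 0 ≤ p) (hp1 : p < 1)
    (hA : A = Real.sqrt (p ^ 2 + 4 * m * (m - 1)))
    (hl1 : lam1 = (p * (2 * m - 1) + A) / (2 * m * (1 + p)))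
    (hl2 : lam2 = (p * (2 * m - 1) - A) / (2 * m * (1 + p)))
    (ht₀ : 0 < t₀) :
    ∃! a : ℝ × ℝ,
      (∀ t : ℝ, 0 < t →
        HasDerivAt
          (fun s : ℝ => a.1 * (s / t₀) ^ lam1 + a.2 * (s / t₀) ^ lam2)
          (((a.1 * ((1 + p) * lam1 - p * (m - 1) / m)) * (t / t₀) ^ lam1
              + (a.2 * ((1 + p) * lam2 - p * (m - 1) / m)) * (t / t₀) ^ lam2)
              / ((1 + p) * t)
            + (p * (m - 1) / (m * (1 + p)))
              * (a.1 * (t / t₀) ^ lam1 + a.2 * (t / t₀) ^ lam2) / t) t ∧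
        HasDerivAt
          (fun s : ℝ => (a.1 * ((1 + p) * lam1 - p * (m - 1) / m)) * (s / t₀) ^ lam1
              + (a.2 * ((1 + p) * lam2 - p * (m - 1) / m)) * (s / t₀) ^ lam2)
          ((p / (1 + p))
              * ((a.1 * ((1 + p) * lam1 - p * (m - 1) / m)) * (t / t₀) ^ lam1
                + (a.2 * ((1 + p) * lam2 - p * (m - 1) / m)) * (t / t₀) ^ lam2) / t
            + ((m - 1) / (m * (1 + p)))
              * (a.1 * (t / t₀) ^ lam1 + a.2 * (t / t₀) ^ lam2) / t) t) ∧
      a.1 * (t₀ / t₀) ^ lam1 + a.2 * (t₀ / t₀) ^ lam2 = p ∧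
      (a.1 * ((1 + p) * lam1 - p * (m - 1) / m)) * (t₀ / t₀) ^ lam1
        + (a.2 * ((1 + p) * lam2 - p * (m - 1) / m)) * (t₀ / t₀) ^ lam2 = 1 :=
  dined_unique_solution_general m p A lam1 lam2 t₀ hm hp0 hA hl1 hl2 ht₀
end

section
/- Let c > 0, λ > 0 and t > 0 be real numbers, and let T be a random variable uniformly distributed on the interval (0, t]. Then for every real k ≥ c, the probability that c·(t/T)^λ ≥ k equals (c/k)^{1/λ}; equivalently, P[c·(t/T)^λ < k] = 1 − (c/k)^{1/λ}. -/
/-!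
The mean-field degree `c (t/x)^λ` is decreasing in the arrival time `x`, so on `(0, t]` the event
`k ≤ c (t/x)^λ` is exactly `x ≤ t (c/k)^{1/λ}`, a subinterval of `(0, t]` (as `k ≥ c`).
For `T` uniform on `(0, t]` its probability is its relative length `(c/k)^{1/λ}`, and the
complementary event `(t (c/k)^{1/λ}, t]` has probability `1 - (c/k)^{1/λ}`.
-/

open MeasureTheory ProbabilityTheory Set

theorem MeasureTheory.pdf.IsUniform.measure_preimage_of_Ioc_inter_eq {Ω : Type*}
    [MeasurableSpace Ω] {μ : Measure Ω} {X : Ω → ℝ} {l u a b : ℝ} {A : Set ℝ}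
    (hX : pdf.IsUniform X (Ioc l u) μ) (hlu : l < u) (hA : MeasurableSet A)
    (hXA : Ioc l u ∩ A = Ioc a b) :
    μ (X ⁻¹' A) = ENNReal.ofReal ((b - a) / (u - l)) := by
  rw [hX.measure_preimage (by simpa using hlu) (by simp) hA, hXA, Real.volume_Ioc,
    Real.volume_Ioc, ENNReal.ofReal_div_of_pos (sub_pos.mpr hlu)]

section MeanFieldDegree

variable {c lam t k : ℝ}

theorem rpow_div_le_one (hc : 0 < c) (hck : c ≤ k) (hlam : 0 < lam) : (c / k) ^ (1 / lam) ≤ 1 :=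
  Real.rpow_le_one (div_nonneg hc.le (hc.trans_le hck).le)
    (div_le_one_of_le₀ hck (hc.le.trans hck)) (by positivity)

theorem le_mul_div_rpow_iff (hc : 0 < c) (hlam : 0 < lam) (hk : 0 < k) (ht : 0 < t) {x : ℝ}
    (hx : 0 < x) : k ≤ c * (t / x) ^ lam ↔ x ≤ t * (c / k) ^ (1 / lam) := by
  have hxt : (x / t) ^ lam = ((t / x) ^ lam)⁻¹ := by
    rw [← Real.inv_rpow (by positivity), inv_div]
  rw [← div_le_iff₀' ht, one_div,
    Real.le_rpow_inv_iff_of_pos (by positivity) (by positivity) hlam, le_div_iff₀ hk, hxt,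
    inv_mul_le_iff₀ (by positivity), mul_comm]

theorem Ioc_inter_setOf_le_mul_div_rpow (hc : 0 < c) (hlam : 0 < lam) (hck : c ≤ k) (ht : 0 < t) :
    Ioc 0 t ∩ {x | k ≤ c * (t / x) ^ lam} = Ioc 0 (t * (c / k) ^ (1 / lam)) := by
  have hk : 0 < k := hc.trans_le hck
  calc Ioc 0 t ∩ {x | k ≤ c * (t / x) ^ lam} = Ioc 0 t ∩ Iic (t * (c / k) ^ (1 / lam)) :=
        ext fun x => and_congr_right fun hx => le_mul_div_rpow_iff hc hlam hk ht hx.1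
    _ = Ioc 0 (t * (c / k) ^ (1 / lam)) := by
        rw [Ioc_inter_Iic,
          min_eq_right (mul_le_of_le_one_right ht.le (rpow_div_le_one hc hck hlam))]

theorem Ioc_inter_setOf_mul_div_rpow_lt (hc : 0 < c) (hlam : 0 < lam) (hck : c ≤ k) (ht : 0 < t) :
    Ioc 0 t ∩ {x | c * (t / x) ^ lam < k} = Ioc (t * (c / k) ^ (1 / lam)) t := by
  have hk : 0 < k := hc.trans_le hck
  calc Ioc 0 t ∩ {x | c * (t / x) ^ lam < k} = Ioc 0 t ∩ Ioi (t * (c / k) ^ (1 / lam)) :=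
        ext fun x => and_congr_right fun hx =>
          lt_iff_lt_of_le_iff_le (le_mul_div_rpow_iff hc hlam hk ht hx.1)
    _ = Ioc (t * (c / k) ^ (1 / lam)) t := by
        rw [Ioc_inter_Ioi, max_eq_right (by positivity)]

end MeanFieldDegree

theorem dined_degree_tail_probability_general {Ω : Type*} [MeasureSpace Ω]
    (c lam t : ℝ) (hc : 0 < c) (hlam : 0 < lam) (ht : 0 < t)
    (T : Ω → ℝ) (hT : pdf.IsUniform T (Set.Ioc 0 t) ℙ) :
    ∀ k : ℝ, c ≤ k →
      ℙ {ω | k ≤ c * (t / T ω) ^ lam} = ENNReal.ofReal ((c / k) ^ (1 / lam)) ∧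
      ℙ {ω | c * (t / T ω) ^ lam < k} = ENNReal.ofReal (1 - (c / k) ^ (1 / lam)) := by
  intro k hck
  have hdeg : Measurable fun x : ℝ => c * (t / x) ^ lam := by fun_prop
  refine ⟨(hT.measure_preimage_of_Ioc_inter_eq ht (measurableSet_le measurable_const hdeg)
      (Ioc_inter_setOf_le_mul_div_rpow hc hlam hck ht)).trans ?_,
    (hT.measure_preimage_of_Ioc_inter_eq ht (measurableSet_lt hdeg measurable_const)
      (Ioc_inter_setOf_mul_div_rpow_lt hc hlam hck ht)).trans ?_⟩
  · rw [sub_zero, sub_zero, mul_div_cancel_left₀ _ ht.ne']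
  · rw [sub_zero, ← mul_one_sub, mul_div_cancel_left₀ _ ht.ne']

/-- If `T` is uniformly distributed on `(0, t]`, then for every `k ≥ c` the
probability that `c(t/T)^λ ≥ k` is `(c/k)^{1/λ}`; equivalently the probability
that `c(t/T)^λ < k` is `1 − (c/k)^{1/λ}`. -/
theorem dined_degree_tail_probability {Ω : Type*} [MeasureSpace Ω]
    [IsProbabilityMeasure (ℙ : Measure Ω)]
    (c lam t : ℝ) (hc : 0 < c) (hlam : 0 < lam) (ht : 0 < t)
    (T : Ω → ℝ) (hT : pdf.IsUniform T (Set.Ioc 0 t) ℙ) :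
    ∀ k : ℝ, c ≤ k →
      ℙ {ω | k ≤ c * (t / T ω) ^ lam} = ENNReal.ofReal ((c / k) ^ (1 / lam)) ∧
      ℙ {ω | c * (t / T ω) ^ lam < k} = ENNReal.ofReal (1 - (c / k) ^ (1 / lam)) :=
  dined_degree_tail_probability_general c lam t hc hlam ht T hT
end
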